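/- Let (B,S) be an S5-subordination algebra. The relation Q : B → NI(B) given by a Q I iff a ∈ I is an isomorphism in the category of S5-subordination algebras and compatible subordinations, with inverse T given by I T a iff a ∈ S[U(I)]; that is, T ∘ Q = S and Q ∘ T = ≺ on NI(B). -/

import Mathlib

/-!
For `a S b`, density gives `a S c₁ S c₂ S b`. The pseudocomplement `K*` of any set `K` with
`K ⊆ S⁻¹[K]` is a normal round ideal, and `I = {x | x S c₁ᶜ}*` contains `a` and lies below
`c₂`, so `a (T ∘ Q) b`; the converse is monotonicity of `S`. For `Q ∘ T = ≺` only the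
roundness of `J` matters: a common element `u ∈ U(I) ∩ J` has some `y ∈ J` with `u S y`.
-/

open Set

/-- Image of a set under a relation: `S[X] = {b | ∃ x ∈ X, x S b}`. -/
def relImg {B₁ B₂ : Type*} (S : B₁ → B₂ → Prop) (X : Set B₁) : Set B₂ :=
  {b | ∃ x ∈ X, S x b}

/-- Preimage of a set under a relation: `S⁻¹[X] = {a | ∃ x ∈ X, a S x}`. -/
def relPre {B₁ B₂ : Type*} (S : B₁ → B₂ → Prop) (X : Set B₂) : Set B₁ :=
  {a | ∃ x ∈ X, S a x}

/-- Relation composition: `a (T₂ ∘ T₁) c` iff `∃ b, a T₁ b ∧ b T₂ c`. -/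
def relComp {B₁ B₂ B₃ : Type*} (T₂ : B₂ → B₃ → Prop) (T₁ : B₁ → B₂ → Prop) :
    B₁ → B₃ → Prop :=
  fun a c => ∃ b, T₁ a b ∧ T₂ b c

/-- Pointwise complement of a set: `¬X = {¬x | x ∈ X}`. -/
def complSet {B : Type*} [BooleanAlgebra B] (X : Set B) : Set B := (·ᶜ) '' X

/-- A subordination between boolean algebras (axioms S1–S4). -/
structure IsSubord {B₁ B₂ : Type*} [BooleanAlgebra B₁] [BooleanAlgebra B₂]
    (T : B₁ → B₂ → Prop) : Prop where
  rel_bot : T ⊥ ⊥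
  rel_top : T ⊤ ⊤
  sup_left : ∀ a b c, T a c → T b c → T (a ⊔ b) c
  inf_right : ∀ a c d, T a c → T a d → T a (c ⊓ d)
  mono : ∀ a b c d, a ≤ b → T b c → c ≤ d → T a d

/-- An S5-subordination on a boolean algebra (axioms S1–S7). -/
structure IsS5Sub {B : Type*} [BooleanAlgebra B] (S : B → B → Prop)
    extends IsSubord S : Prop where
  le_of_rel : ∀ a b, S a b → a ≤ b
  compl_rel : ∀ a b, S a b → S bᶜ aᶜ
  dense : ∀ a b, S a b → ∃ c, S a c ∧ S c b

/-- A compatible subordination between S5-subordination algebras. -/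
def IsCompat {B₁ B₂ : Type*} [BooleanAlgebra B₁] [BooleanAlgebra B₂]
    (S₁ : B₁ → B₁ → Prop) (S₂ : B₂ → B₂ → Prop) (T : B₁ → B₂ → Prop) : Prop :=
  IsSubord T ∧ relComp S₂ T = T ∧ relComp T S₁ = T

/-- Ideal of a boolean algebra (as a set). -/
def IsIdeal {B : Type*} [BooleanAlgebra B] (I : Set B) : Prop :=
  ⊥ ∈ I ∧ (∀ a b : B, a ≤ b → b ∈ I → a ∈ I) ∧ (∀ a b : B, a ∈ I → b ∈ I → a ⊔ b ∈ I)

/-- Round ideal: an ideal with `I = S⁻¹[I]`. -/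
def IsRoundIdeal {B : Type*} [BooleanAlgebra B] (S : B → B → Prop) (I : Set B) : Prop :=
  IsIdeal I ∧ relPre S I = I

/-- The ideal generated by a set: intersection of all ideals containing it. -/
def idealGen {B : Type*} [BooleanAlgebra B] (X : Set B) : Set B :=
  ⋂₀ {J | IsIdeal J ∧ X ⊆ J}

/-- The pseudocomplement of a round ideal: `I* = ¬S[U(I)]`. -/
def pstar {B : Type*} [BooleanAlgebra B] (S : B → B → Prop) (I : Set B) : Set B :=
  complSet (relImg S (upperBounds I))

/-- The well-inside relation on round ideals: `I ≺ J` iff `U(I) ∩ J ≠ ∅`. -/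
def precR {B : Type*} [BooleanAlgebra B] (I J : Set B) : Prop :=
  (upperBounds I ∩ J).Nonempty

/-- Normal round ideal: a round ideal with `I = I**`. -/
def IsNormalRoundIdeal {B : Type*} [BooleanAlgebra B] (S : B → B → Prop) (I : Set B) : Prop :=
  IsRoundIdeal S I ∧ pstar S (pstar S I) = I

/-- The dual of a subordination: `b T̃ a` iff `¬a T ¬b`. -/
def relDual {B₁ B₂ : Type*} [BooleanAlgebra B₁] [BooleanAlgebra B₂]
    (T : B₁ → B₂ → Prop) : B₂ → B₁ → Prop :=
  fun b a => T aᶜ bᶜ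

/-- Continuity of a compatible subordination. -/
def IsContinuousSub {B₁ B₂ : Type*} [BooleanAlgebra B₁] [BooleanAlgebra B₂]
    (S₁ : B₁ → B₁ → Prop) (S₂ : B₂ → B₂ → Prop) (T : B₁ → B₂ → Prop) : Prop :=
  ∀ b₁ b₂, S₂ b₁ b₂ → ∃ a, relDual T b₁ a ∧ ∀ a', relDual T b₂ a' → S₁ a a'

/-- Functional subordination: `T̃ ∘ T ⊆ S₁` and `S₂ ⊆ T ∘ T̃`. -/
def IsFunctionalSub {B₁ B₂ : Type*} [BooleanAlgebra B₁] [BooleanAlgebra B₂]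
    (S₁ : B₁ → B₁ → Prop) (S₂ : B₂ → B₂ → Prop) (T : B₁ → B₂ → Prop) : Prop :=
  (∀ a a', relComp (relDual T) T a a' → S₁ a a') ∧
  (∀ b b', S₂ b b' → relComp T (relDual T) b b')

section NormalRoundIdeal

variable {B : Type*} [BooleanAlgebra B] {S : B → B → Prop}

lemma mem_pstar_iff {K : Set B} {x : B} :
    x ∈ pstar S K ↔ ∃ u ∈ upperBounds K, S u xᶜ := by
  constructor
  · rintro ⟨v, ⟨u, hu, huv⟩, rfl⟩
    exact ⟨u, hu, by rwa [compl_compl]⟩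
  · rintro ⟨u, hu, h⟩
    exact ⟨xᶜ, ⟨u, hu, h⟩, compl_compl x⟩

lemma pstar_anti {K L : Set B} (h : K ⊆ L) : pstar S L ⊆ pstar S K := by
  intro x hx
  rw [mem_pstar_iff] at hx ⊢
  obtain ⟨u, hu, hux⟩ := hx
  exact ⟨u, fun y hy => hu (h hy), hux⟩

lemma le_compl_of_mem_pstar (hS : IsS5Sub S) {K : Set B} {x y : B}
    (hx : x ∈ pstar S K) (hy : y ∈ K) : x ≤ yᶜ := by
  obtain ⟨u, hu, hux⟩ := mem_pstar_iff.mp hx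
  exact le_compl_comm.mp ((hu hy).trans (hS.le_of_rel _ _ hux))

lemma isRoundIdeal_pstar (hS : IsS5Sub S) (K : Set B) : IsRoundIdeal S (pstar S K) := by
  refine ⟨⟨?_, ?_, ?_⟩, ?_⟩
  · rw [mem_pstar_iff]
    exact ⟨⊤, fun _ _ => le_top, compl_bot (α := B) ▸ hS.rel_top⟩
  · intro a b hab hb
    rw [mem_pstar_iff] at hb ⊢
    obtain ⟨u, hu, hub⟩ := hb
    exact ⟨u, hu, hS.mono _ _ _ _ le_rfl hub (compl_le_compl hab)⟩
  · intro a b ha hb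
    rw [mem_pstar_iff] at ha hb ⊢
    obtain ⟨u, hu, hua⟩ := ha
    obtain ⟨v, hv, hvb⟩ := hb
    refine ⟨u ⊓ v, fun y hy => le_inf (hu hy) (hv hy), ?_⟩
    rw [compl_sup]
    exact hS.inf_right _ _ _ (hS.mono _ _ _ _ inf_le_left hua le_rfl)
      (hS.mono _ _ _ _ inf_le_right hvb le_rfl)
  · ext x
    constructor
    · rintro ⟨w, hw, hxw⟩
      rw [mem_pstar_iff]
      exact ⟨wᶜ, fun y hy => le_compl_comm.mp (le_compl_of_mem_pstar hS hw hy),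
        hS.compl_rel _ _ hxw⟩
    · intro hx
      obtain ⟨u, hu, hux⟩ := mem_pstar_iff.mp hx
      obtain ⟨c, huc, hcx⟩ := hS.dense _ _ hux
      refine ⟨cᶜ, mem_pstar_iff.mpr ⟨u, hu, by rwa [compl_compl]⟩, ?_⟩
      simpa only [compl_compl] using hS.compl_rel _ _ hcx

lemma subset_pstar_pstar (hS : IsS5Sub S) {K : Set B} (hK : K ⊆ relPre S K) :
    K ⊆ pstar S (pstar S K) := by
  intro x hx
  obtain ⟨y, hy, hxy⟩ := hK hx
  exact mem_pstar_iff.mpr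
    ⟨yᶜ, fun w hw => le_compl_of_mem_pstar hS hw hy, hS.compl_rel _ _ hxy⟩

lemma isNormalRoundIdeal_pstar (hS : IsS5Sub S) {K : Set B} (hK : K ⊆ relPre S K) :
    IsNormalRoundIdeal S (pstar S K) :=
  ⟨isRoundIdeal_pstar hS K,
    le_antisymm (pstar_anti (subset_pstar_pstar hS hK))
      (subset_pstar_pstar hS (isRoundIdeal_pstar hS K).2.ge)⟩

lemma exists_normalRoundIdeal_of_rel (hS : IsS5Sub S) {a b : B} (hab : S a b) :
    ∃ I : Set B, IsNormalRoundIdeal S I ∧ a ∈ I ∧ b ∈ relImg S (upperBounds I) := by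
  obtain ⟨c₁, hac₁, hc₁b⟩ := hS.dense _ _ hab
  obtain ⟨c₂, hc₁c₂, hc₂b⟩ := hS.dense _ _ hc₁b
  have hround : {x | S x c₁ᶜ} ⊆ relPre S {x | S x c₁ᶜ} := fun x hx => by
    obtain ⟨c, hxc, hc⟩ := hS.dense _ _ hx
    exact ⟨c, hc, hxc⟩
  refine ⟨pstar S {x | S x c₁ᶜ}, isNormalRoundIdeal_pstar hS hround, ?_, c₂, ?_, hc₂b⟩
  · exact mem_pstar_iff.mpr ⟨c₁ᶜ, fun x hx => hS.le_of_rel _ _ hx, hS.compl_rel _ _ hac₁⟩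
  · intro x hx
    simpa only [compl_compl] using
      le_compl_of_mem_pstar hS hx (show S c₂ᶜ c₁ᶜ from hS.compl_rel _ _ hc₁c₂)

lemma exists_mem_relImg_upperBounds_iff_precR (hS : IsS5Sub S) {I J : Set B}
    (hJ : J ⊆ relPre S J) :
    (∃ a : B, a ∈ relImg S (upperBounds I) ∧ a ∈ J) ↔ precR I J := by
  constructor
  · rintro ⟨a, ⟨u, hu, hua⟩, haJ⟩
    exact ⟨a, fun y hy => (hu hy).trans (hS.le_of_rel _ _ hua), haJ⟩
  · rintro ⟨u, huI, huJ⟩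
    obtain ⟨y, hyJ, huy⟩ := hJ huJ
    exact ⟨y, ⟨u, huI, huy⟩, hyJ⟩

end NormalRoundIdeal

/-- `Q : B → NI(B)`, `a Q I ↔ a ∈ I`, is an isomorphism in
`SubS5^S` with inverse `T`, `I T a ↔ a ∈ S[U(I)]`: `T ∘ Q = S` and
`Q ∘ T = ≺` on `NI(B)`. -/
theorem stmt11 {B : Type*} [BooleanAlgebra B] (S : B → B → Prop) (hS : IsS5Sub S) :
    (∀ a b : B,
      (∃ I : Set B, IsNormalRoundIdeal S I ∧ a ∈ I ∧ b ∈ relImg S (upperBounds I)) ↔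
        S a b) ∧
    (∀ I J : Set B, IsNormalRoundIdeal S I → IsNormalRoundIdeal S J →
      ((∃ a : B, a ∈ relImg S (upperBounds I) ∧ a ∈ J) ↔ precR I J)) := by
  refine ⟨fun a b => ⟨?_, exists_normalRoundIdeal_of_rel hS⟩,
    fun I J _ hJ => exists_mem_relImg_upperBounds_iff_precR hS hJ.1.2.ge⟩
  rintro ⟨I, -, haI, u, hu, hub⟩
  exact hS.mono _ _ _ _ (hu haI) hub le_rfl
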